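/- arXiv:physics/0611004 — 3 statements merged into one kernel-verified Lean document; each statement's English description precedes it below -/
import Mathlib

section
/- Under the same assumptions ($a+b+c=0$, $c \ne 0$, $a/c > 0$), for finitely supported sequences $u$ with $u_0=u_{-1}=0$, the nonlinear term also conserves the second quadratic invariant: $\sum_{n\ge 1} (a/c)^n\, \mathrm{Re}\big[\overline{u_n}\, i (a k_{n+1} u_{n+2} \overline{u_{n+1}} + b k_n u_{n+1} \overline{u_{n-1}} - c k_{n-1} u_{n-1} u_{n-2})\big] = 0$. -/
set_option maxHeartbeats 1000000

/-- Conservation of the second quadratic invariant `W = ∑ (a/c)^n |u_n|^2`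
by the Sabra shell model nonlinearity. -/
theorem sabra_second_invariant_conservation
    (a b c k0 lam : ℝ) (hk0 : 0 < k0) (hlam : 1 < lam)
    (habc : a + b + c = 0) (hc : c ≠ 0) (hac : 0 < a / c)
    (k : ℤ → ℝ) (hk : ∀ n, k n = k0 * lam ^ n)
    (u : ℤ → ℂ) (hu : (Function.support u).Finite)
    (hbd : ∀ n : ℤ, n ≤ 0 → u n = 0) :
    ∑' n : ℤ, ((a / c) ^ n : ℝ) * ((starRingEnd ℂ) (u n) *
      (Complex.I * (((a * k (n+1) : ℝ) : ℂ) * u (n+2) * (starRingEnd ℂ) (u (n+1))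
        + ((b * k n : ℝ) : ℂ) * u (n+1) * (starRingEnd ℂ) (u (n-1))
        - ((c * k (n-1) : ℝ) : ℂ) * u (n-1) * u (n-2)))).re = 0 := by
  set r := a / c with hr
  have hr0 : r ≠ 0 := ne_of_gt hac
  set A : ℤ → ℝ := fun n =>
    (Complex.I * (starRingEnd ℂ) (u n) * (starRingEnd ℂ) (u (n+1)) * u (n+2)).re with hA
  set g1 : ℤ → ℝ := fun n => r ^ n * (a * k (n+1)) * A n with hg1
  set g2 : ℤ → ℝ := fun n => r ^ n * (b * k n) * A (n-1) with hg2
  set g3 : ℤ → ℝ := fun n => r ^ n * (c * k (n-1)) * A (n-2) with hg3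
  -- A vanishes where u vanishes
  have hA0 : ∀ n, u n = 0 → A n = 0 := by
    intro n h
    simp [hA, h]
  -- summability
  have hs1 : Summable g1 := by
    apply summable_of_finite_support
    apply hu.subset
    intro n hn
    simp only [Function.mem_support, hg1] at hn ⊢
    intro h
    exact hn (by simp [hA0 n h])
  have hs2 : Summable g2 := by
    apply summable_of_finite_support
    apply (hu.image (fun m => m + 1)).subset
    intro n hn
    simp only [Function.mem_support, hg2] at hn
    refine ⟨n - 1, ?_, by ring⟩
    intro h
    exact hn (by simp [hA0 _ h])
  have hs3 : Summable g3 := by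
    apply summable_of_finite_support
    apply (hu.image (fun m => m + 2)).subset
    intro n hn
    simp only [Function.mem_support, hg3] at hn
    refine ⟨n - 2, ?_, by ring⟩
    intro h
    exact hn (by simp [hA0 _ h])
  -- pointwise decomposition
  have hpt : ∀ n : ℤ, ((a / c) ^ n : ℝ) * ((starRingEnd ℂ) (u n) *
      (Complex.I * (((a * k (n+1) : ℝ) : ℂ) * u (n+2) * (starRingEnd ℂ) (u (n+1))
        + ((b * k n : ℝ) : ℂ) * u (n+1) * (starRingEnd ℂ) (u (n-1))
        - ((c * k (n-1) : ℝ) : ℂ) * u (n-1) * u (n-2)))).re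
      = g1 n + g2 n + g3 n := by
    intro n
    simp only [hg1, hg2, hg3, hA, ← hr]
    simp only [Complex.mul_re, Complex.mul_im, Complex.add_re, Complex.add_im,
      Complex.sub_re, Complex.sub_im, Complex.I_re, Complex.I_im,
      Complex.ofReal_re, Complex.ofReal_im, Complex.conj_re, Complex.conj_im]
    ring
  rw [tsum_congr hpt]
  rw [Summable.tsum_add (hs1.add hs2) hs3, Summable.tsum_add hs1 hs2]
  have e2 : ∑' n : ℤ, g2 n = ∑' n : ℤ, g2 (n + 1) :=
    ((Equiv.addRight (1 : ℤ)).tsum_eq g2).symm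
  have e3 : ∑' n : ℤ, g3 n = ∑' n : ℤ, g3 (n + 2) :=
    ((Equiv.addRight (2 : ℤ)).tsum_eq g3).symm
  rw [e2, e3]
  have hs2' : Summable (fun n : ℤ => g2 (n + 1)) :=
    (Equiv.addRight (1 : ℤ)).summable_iff.mpr hs2
  have hs3' : Summable (fun n : ℤ => g3 (n + 2)) :=
    (Equiv.addRight (2 : ℤ)).summable_iff.mpr hs3
  rw [← Summable.tsum_add hs1 hs2', ← Summable.tsum_add (hs1.add hs2') hs3']
  have hcoef : a + r * b + r ^ 2 * c = 0 := by
    have hb : b = -a - c := by linarith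
    rw [hr, hb]
    field_simp
    ring
  have : ∀ n : ℤ, g1 n + g2 (n + 1) + g3 (n + 2) = 0 := by
    intro n
    simp only [hg1, hg2, hg3]
    have h1 : n + 1 - 1 = n := by ring
    have h2 : n + 2 - 2 = n := by ring
    have h3 : n + 2 - 1 = n + 1 := by ring
    rw [h1, h2, h3]
    have p1 : r ^ (n + 1) = r ^ n * r := zpow_add_one₀ hr0 n
    have p2 : r ^ (n + 2) = r ^ n * r ^ 2 := by
      rw [zpow_add₀ hr0]; norm_cast
    rw [p1, p2]
    linear_combination r ^ n * k (n + 1) * A n * hcoef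
  rw [tsum_congr this]
  simp
end

section
/- Let $\nu > 0$, $k_1 > 0$, $f \in \mathbb{R}$, and suppose $v_1 : [0,\infty)\to\mathbb{R}$ is differentiable and satisfies $\frac{1}{2}\frac{d}{dt} v_1(t)^2 + \nu k_1^2 v_1(t)^2 + v_1(t)\, g(t) = 0$, where $g : [0,\infty)\to\mathbb{R}$ is bounded and $g(t) \to 0$ as $t \to \infty$, and $v_1$ is bounded. Then $v_1(t) \to 0$ as $t \to \infty$. -/
/-- Final step of the trivial-attractor corollary: a bounded `v₁` satisfying
`(1/2)(v₁²)' + ν k₁² v₁² + v₁ g = 0` with bounded `g → 0` converges to 0. -/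
theorem sabra_first_component_tendsto_zero
    (ν k1 : ℝ) (hν : 0 < ν) (hk1 : 0 < k1)
    (v g : ℝ → ℝ) (hv : Differentiable ℝ v)
    (hvb : ∃ M : ℝ, ∀ t : ℝ, |v t| ≤ M)
    (hgb : ∃ M : ℝ, ∀ t : ℝ, |g t| ≤ M)
    (hg0 : Filter.Tendsto g Filter.atTop (nhds 0))
    (hode : ∀ t : ℝ, 0 ≤ t →
      (1/2) * deriv (fun s => v s ^ 2) t + ν * k1 ^ 2 * v t ^ 2 + v t * g t = 0) :
    Filter.Tendsto v Filter.atTop (nhds 0) := by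
  set a : ℝ := ν * k1 ^ 2 with ha_def
  have ha : 0 < a := by positivity
  set E : ℝ → ℝ := fun s => v s ^ 2 with hE_def
  have hEdiff : Differentiable ℝ E := by
    intro x
    exact ((hv x).pow 2)
  have hEderiv : ∀ t : ℝ, 0 ≤ t → deriv E t = -(2 * a) * E t - 2 * (v t * g t) := by
    intro t ht
    have := hode t ht
    simp only [hE_def] at this ⊢
    linarith
  -- Main claim: for every ε > 0, eventually |v t| ≤ ε.
  have main : ∀ ε : ℝ, 0 < ε → ∀ᶠ t in Filter.atTop, |v t| ≤ ε := by
    intro ε hε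
    -- choose T ≥ 0 with |g t| ≤ a*ε/2 for t ≥ T
    have hgev : ∀ᶠ t in Filter.atTop, |g t| ≤ a * ε / 2 := by
      have := Metric.tendsto_atTop.mp hg0 (a * ε / 2) (by positivity)
      obtain ⟨N, hN⟩ := this
      filter_upwards [Filter.eventually_ge_atTop N] with t ht
      have := hN t ht
      rw [Real.dist_eq, sub_zero] at this
      exact this.le
    obtain ⟨T₀, hT₀⟩ := Filter.eventually_atTop.mp hgev
    set T : ℝ := max T₀ 0 with hT_def
    have hT0 : (0:ℝ) ≤ T := le_max_right _ _
    have hgsmall : ∀ t : ℝ, T ≤ t → |g t| ≤ a * ε / 2 :=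
      fun t ht => hT₀ t (le_trans (le_max_left _ _) ht)
    -- key derivative bound
    have key : ∀ t : ℝ, T ≤ t → ε ^ 2 ≤ E t → deriv E t ≤ -(a * ε ^ 2) := by
      intro t ht hEt
      have ht0 : (0:ℝ) ≤ t := le_trans hT0 ht
      rw [hEderiv t ht0]
      have hgt := hgsmall t ht
      have habs : |v t| * |g t| ≤ |v t| * (a * ε / 2) :=
        mul_le_mul_of_nonneg_left hgt (abs_nonneg _)
      have hvg : -(v t * g t) ≤ |v t| * |g t| := by
        rw [← abs_mul]; exact neg_le_abs _
      have hEt' : ε ^ 2 ≤ v t ^ 2 := hEt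
      have hev : ε ≤ |v t| := by
        nlinarith [sq_abs (v t), abs_nonneg (v t)]
      have hEeq : E t = |v t| ^ 2 := (sq_abs (v t)).symm
      nlinarith [abs_nonneg (v t), sq_nonneg (|v t| - ε)]
    -- MVT helper on an interval [x,y] ⊆ [T,∞) where E ≥ ε² on (x,y)
    have mvt : ∀ x y : ℝ, T ≤ x → x ≤ y → (∀ u, u ∈ Set.Ioo x y → ε ^ 2 ≤ E u) →
        E y - E x ≤ -(a * ε ^ 2) * (y - x) := by
      intro x y hTx hxy hmid
      refine (convex_Icc x y).image_sub_le_mul_sub_of_deriv_le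
        hEdiff.continuous.continuousOn hEdiff.differentiableOn ?_ x
        (Set.left_mem_Icc.mpr hxy) y (Set.right_mem_Icc.mpr hxy) hxy
      intro u hu
      rw [interior_Icc] at hu
      exact key u (le_trans hTx hu.1.le) (hmid u hu)
    have hE0 : ∀ t : ℝ, 0 ≤ E t := fun t => sq_nonneg (v t)
    -- Step 1: ∃ t₀ ≥ T with E t₀ ≤ ε²
    have step1 : ∃ t₀ : ℝ, T ≤ t₀ ∧ E t₀ ≤ ε ^ 2 := by
      by_contra hcon
      push_neg at hcon
      obtain ⟨y, hy_def⟩ : ∃ y : ℝ, y = T + (E T + 1) / (a * ε ^ 2) := ⟨_, rfl⟩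
      have hden : 0 < a * ε ^ 2 := by positivity
      have hpos : 0 ≤ (E T + 1) / (a * ε ^ 2) := by positivity
      have hTy : T ≤ y := by rw [hy_def]; linarith
      have hmvt := mvt T y le_rfl hTy (fun u hu => (hcon u hu.1.le).le)
      have hyT : -(a * ε ^ 2) * (y - T) = -(E T + 1) := by
        rw [hy_def]; field_simp; ring
      rw [hyT] at hmvt
      have := hE0 y
      linarith
    obtain ⟨t₀, ht₀T, ht₀E⟩ := step1
    -- Step 2: E stays ≤ ε² forever after t₀
    have step2 : ∀ t : ℝ, t₀ ≤ t → E t ≤ ε ^ 2 := by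
      intro t₁ ht₁
      by_contra hbig
      push_neg at hbig
      obtain ⟨S, hS_def⟩ : ∃ S : Set ℝ, S = {u | u ∈ Set.Icc t₀ t₁ ∧ E u ≤ ε ^ 2} := ⟨_, rfl⟩
      have hSne : S.Nonempty := ⟨t₀, by rw [hS_def]; exact ⟨⟨le_rfl, ht₁⟩, ht₀E⟩⟩
      have hSbdd : BddAbove S := ⟨t₁, fun u hu => by rw [hS_def] at hu; exact hu.1.2⟩
      obtain ⟨s, hs_def⟩ : ∃ s : ℝ, s = sSup S := ⟨_, rfl⟩
      have hst₀ : t₀ ≤ s := by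
        rw [hs_def]
        exact le_csSup hSbdd (by rw [hS_def]; exact ⟨⟨le_rfl, ht₁⟩, ht₀E⟩)
      have hst₁ : s ≤ t₁ := by
        rw [hs_def]
        exact csSup_le hSne (fun u hu => by rw [hS_def] at hu; exact hu.1.2)
      have hScl : IsClosed S := by
        have : S = Set.Icc t₀ t₁ ∩ E ⁻¹' Set.Iic (ε ^ 2) := by
          rw [hS_def]; ext u; simp [Set.mem_Icc, and_assoc]
        rw [this]
        exact isClosed_Icc.inter (isClosed_Iic.preimage hEdiff.continuous)
      have hsS : s ∈ S := hs_def ▸ hScl.csSup_mem hSne hSbdd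
      have hsE : E s ≤ ε ^ 2 := by rw [hS_def] at hsS; exact hsS.2
      have hslt : s < t₁ := lt_of_le_of_ne hst₁ (by
        rintro rfl
        exact absurd hsE (not_le.mpr hbig))
      have hmid : ∀ u, u ∈ Set.Ioo s t₁ → ε ^ 2 ≤ E u := by
        intro u hu
        by_contra hle
        push_neg at hle
        have huS : u ∈ S := by
          rw [hS_def]
          exact ⟨⟨le_trans hst₀ hu.1.le, hu.2.le⟩, hle.le⟩
        exact absurd (hs_def ▸ le_csSup hSbdd huS) (not_le.mpr hu.1)
      have hmvt := mvt s t₁ (le_trans ht₀T hst₀) hslt.le hmid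
      nlinarith [mul_pos (mul_pos ha (pow_pos hε 2)) (sub_pos.mpr hslt)]
    filter_upwards [Filter.eventually_ge_atTop t₀] with t ht
    have h1 : v t ^ 2 ≤ ε ^ 2 := step2 t ht
    nlinarith [sq_abs (v t), abs_nonneg (v t)]
  rw [Metric.tendsto_nhds]
  intro ε hε
  filter_upwards [main (ε / 2) (by linarith)] with t ht
  rw [Real.dist_eq, sub_zero]
  linarith
end

section
/- Let $\lambda > 1$, $\nu > 0$, $k_n = \lambda^n$, and let $u$ be defined by $u_n = k_n^{-3}$ if $n \equiv 0 \pmod 5$ and $u_n = 0$ otherwise. Then $u$ is a stationary solution of the real Sabra shell model with forcing $g_n = \nu k_n^{-1}$ for $n \equiv 0 \pmod 5$, $g_n = 0$ otherwise: for every $n \ge 1$, $k_{n+1} u_{n+2} u_{n+1} - \epsilon k_n u_{n+1} u_{n-1} + (\epsilon - 1) k_{n-1} u_{n-1} u_{n-2} - \nu k_n^2 u_n + g_n = 0$ (with $u_0 = u_{-1} = 0$), for any $\epsilon \in \mathbb{R}$. -/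
/-! The quadratic terms of the Sabra model couple shells at distance at most 3, so for a sequence
supported on multiples of 5 each of them has a vanishing factor. On an active shell the remaining
balance is `ν k_n² k_n⁻³ = ν k_n⁻¹`. -/

theorem mul_eq_zero_of_eq_zero_of_not_dvd {M₀ : Type*} [MulZeroClass M₀] {m : ℤ} {u : ℤ → M₀}
    (hu : ∀ n, ¬ m ∣ n → u n = 0) {a b : ℤ} (hab : a ≠ b) (hlt : |a - b| < m) :
    u a * u b = 0 := by
  by_cases ha : m ∣ a
  · by_cases hb : m ∣ b
    · exact absurd (sub_eq_zero.mp (Int.eq_zero_of_abs_lt_dvd (dvd_sub ha hb) hlt)) hab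
    · rw [hu b hb, mul_zero]
  · rw [hu a ha, zero_mul]

theorem sq_mul_zpow_neg_three {K : Type*} [DivisionRing K] (x : K) :
    x ^ 2 * x ^ (-3 : ℤ) = x⁻¹ := by
  rw [← zpow_natCast, ← zpow_add' (by norm_num), ← zpow_neg_one]
  norm_num

theorem sabra_multimode_equilibrium_general
    (ε ν : ℝ)
    (k : ℤ → ℝ)
    (g u : ℤ → ℝ)
    (hg : ∀ n : ℤ, g n = if 1 ≤ n ∧ (5 : ℤ) ∣ n then ν * (k n)⁻¹ else 0)
    (hu : ∀ n : ℤ, u n = if 1 ≤ n ∧ (5 : ℤ) ∣ n then (k n) ^ (-3 : ℤ) else 0) :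
    ∀ n : ℤ, 1 ≤ n →
      k (n+1) * u (n+2) * u (n+1) - ε * k n * u (n+1) * u (n-1)
        + (ε - 1) * k (n-1) * u (n-1) * u (n-2) - ν * k n ^ 2 * u n + g n = 0 := by
  intro n _
  have hsupp : ∀ m, ¬ (5 : ℤ) ∣ m → u m = 0 := fun m hm => by simp [hu, hm]
  have hvanish : ∀ a b, a ≠ b → |a - b| < 5 → u a * u b = 0 :=
    fun a b => mul_eq_zero_of_eq_zero_of_not_dvd hsupp
  rw [mul_assoc _ (u (n+2)), mul_assoc _ (u (n+1)), mul_assoc _ (u (n-1)),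
    hvanish (n+2) (n+1) (by omega) (by rw [abs_sub_lt_iff]; omega),
    hvanish (n+1) (n-1) (by omega) (by rw [abs_sub_lt_iff]; omega),
    hvanish (n-1) (n-2) (by omega) (by rw [abs_sub_lt_iff]; omega), hu, hg]
  split_ifs
  · rw [mul_assoc ν, sq_mul_zpow_neg_three]
    ring
  · ring

/-- The multi-mode sequence `u_n = k_n^{-3}` on shells `n ≡ 0 (mod 5)` is a
stationary solution of the real Sabra shell model with forcing `g_n = ν k_n⁻¹`
on those shells, for any `ε`. -/
theorem sabra_multimode_equilibrium
    (ε lam ν : ℝ) (hlam : 1 < lam) (hν : 0 < ν)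
    (k : ℤ → ℝ) (hk : ∀ n, k n = lam ^ n)
    (g u : ℤ → ℝ)
    (hg : ∀ n : ℤ, g n = if 1 ≤ n ∧ (5 : ℤ) ∣ n then ν * (k n)⁻¹ else 0)
    (hu : ∀ n : ℤ, u n = if 1 ≤ n ∧ (5 : ℤ) ∣ n then (k n) ^ (-3 : ℤ) else 0) :
    ∀ n : ℤ, 1 ≤ n →
      k (n+1) * u (n+2) * u (n+1) - ε * k n * u (n+1) * u (n-1)
        + (ε - 1) * k (n-1) * u (n-1) * u (n-2) - ν * k n ^ 2 * u n + g n = 0 :=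
  sabra_multimode_equilibrium_general ε ν k g u hg hu
end
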